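/- Let G be a finite group, let p be the smallest prime divisor of |G|, and let g ∈ G. Let C be a one-product free sequence all of whose terms lie in the cyclic subgroup ⟨g⟩, and let D be a sequence of length p − 1 all of whose terms lie in G \ ⟨g⟩. Then |Π(C·D)| ≥ p·|C|. -/

import Mathlib

/-!
Write `Π₀(S) = {1} ∪ Π(S)` for the products of all subsequences, the empty one included,
and `K = ⟨g⟩`. Since `C` is one-product free, appending a term to `C` adds a new element to `Π₀`, so
`|Π(C)| ≥ |C|`; moreover `Π(C) ⊆ K`. The products `Π₀(D)` meet at least `p` left cosets of `K`:
appending a term `d ∉ K` to `D` either meets a new coset, or the set of cosets met is stable under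
`d`, hence contains the `⟨d⟩`-orbit of `K`, whose size is a divisor `≠ 1` of `|G|`.
Finally `Π₀(D) · Π(C) ⊆ Π(C·D)` contains `|Π(C)|` elements in each of these cosets.
-/

/-- The set `Π(S)` of all products of nonempty subsequences of the sequence
(multiset) `S` over `G`, where the terms of a subsequence may be taken in any order. -/
def subseqProds {G : Type*} [Group G] (S : Multiset G) : Set G :=
  {x | ∃ l : List G, l ≠ [] ∧ (l : Multiset G) ≤ S ∧ l.prod = x}

/-- A sequence `S` over `G` is one-product free if `1 ∉ Π(S)`. -/
def OneProdFree {G : Type*} [Group G] (S : Multiset G) : Prop :=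
  (1 : G) ∉ subseqProds S

open Pointwise MulAction

section SubseqProds

variable {G : Type*} [Group G]

theorem subseqProds_mono {S T : Multiset G} (h : S ≤ T) : subseqProds S ⊆ subseqProds T :=
  fun _ ⟨l, hne, hle, hprod⟩ => ⟨l, hne, hle.trans h, hprod⟩

theorem subseqProds_subset_of_forall_mem {S : Multiset G} {H : Subgroup G}
    (hS : ∀ x ∈ S, x ∈ H) : subseqProds S ⊆ H := by
  rintro _ ⟨l, -, hle, rfl⟩
  exact H.list_prod_mem fun x hx => hS x (Multiset.mem_of_le hle hx)

theorem mem_subseqProds_singleton (a : G) : a ∈ subseqProds {a} :=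
  ⟨[a], List.cons_ne_nil a [], le_rfl, List.prod_singleton⟩

theorem mul_mem_subseqProds {S T : Multiset G} {x y : G} (hx : x ∈ insert 1 (subseqProds S))
    (hy : y ∈ subseqProds T) : x * y ∈ subseqProds (S + T) := by
  obtain rfl | ⟨l, -, hl, rfl⟩ := hx
  · rw [one_mul]
    exact subseqProds_mono (Multiset.le_add_left T S) hy
  · obtain ⟨m, hm, hlm, rfl⟩ := hy
    exact ⟨l ++ m, by simp [hm], by simpa using add_le_add hl hlm, List.prod_append⟩

theorem mul_mem_insert_one_subseqProds {S T : Multiset G} {x y : G}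
    (hx : x ∈ insert 1 (subseqProds S)) (hy : y ∈ insert 1 (subseqProds T)) :
    x * y ∈ insert 1 (subseqProds (S + T)) := by
  obtain rfl | hy := hy
  · rw [mul_one]
    exact Set.insert_subset_insert (subseqProds_mono (Multiset.le_add_right S T)) hx
  · exact Or.inr (mul_mem_subseqProds hx hy)

theorem OneProdFree.of_le {S T : Multiset G} (hT : OneProdFree T) (h : S ≤ T) : OneProdFree S :=
  fun h1 => hT (subseqProds_mono h h1)

theorem OneProdFree.card_le_ncard_subseqProds [Finite G] {S : Multiset G} (hS : OneProdFree S) :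
    Multiset.card S ≤ (subseqProds S).ncard := by
  induction S using Multiset.induction_on with
  | empty => simp
  | cons a S ih =>
    have hcons : S + {a} = a ::ₘ S := by rw [add_comm, Multiset.singleton_add]
    have hsub : (· * a) '' insert 1 (subseqProds S) ⊆ subseqProds (a ::ₘ S) := by
      rintro _ ⟨x, hx, rfl⟩
      exact hcons ▸ mul_mem_subseqProds hx (mem_subseqProds_singleton a)
    calc Multiset.card (a ::ₘ S) = Multiset.card S + 1 := Multiset.card_cons a S
      _ ≤ (subseqProds S).ncard + 1 := by
        gcongr; exact ih (hS.of_le (Multiset.le_cons_self S a))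
      _ = (insert 1 (subseqProds S)).ncard :=
        (Set.ncard_insert_of_notMem (hS.of_le (Multiset.le_cons_self S a))).symm
      _ = ((· * a) '' insert 1 (subseqProds S)).ncard :=
        (Set.ncard_image_of_injective _ (mul_left_injective a)).symm
      _ ≤ (subseqProds (a ::ₘ S)).ncard := Set.ncard_le_ncard hsub

end SubseqProds

section Orbits

variable {G X : Type*} [Group G] [Finite G] [MulAction G X] {p : ℕ}

theorem le_ncard_orbit (hmin : ∀ q : ℕ, q.Prime → q ∣ Nat.card G → p ≤ q) {a : G} {x : X}
    (hax : a • x ≠ x) : p ≤ (orbit G x).ncard := by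
  rw [← index_stabilizer]
  have hne : (stabilizer G x).index ≠ 1 := by
    rw [Ne, Subgroup.index_eq_one]
    exact fun h => hax (h ▸ Subgroup.mem_top a : a ∈ stabilizer G x)
  exact (hmin _ (Nat.minFac_prime hne)
      ((Nat.minFac_dvd _).trans (Subgroup.index_dvd_card _))).trans
    (Nat.minFac_le (Nat.pos_of_ne_zero Subgroup.index_ne_zero_of_finite))

theorem le_ncard_of_smul_subset (hmin : ∀ q : ℕ, q.Prime → q ∣ Nat.card G → p ≤ q)
    {Q : Set X} (hQ : Q.Finite) {a : G} {x : X} (hxQ : x ∈ Q) (hax : a • x ≠ x)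
    (haQ : a • Q ⊆ Q) : p ≤ Q.ncard := by
  have hpow : ∀ n : ℕ, a ^ n • x ∈ Q := by
    intro n
    induction n with
    | zero => simpa using hxQ
    | succ n ih => rw [pow_succ', mul_smul]; exact haQ (Set.smul_mem_smul_set ih)
  have horbit : orbit (Subgroup.zpowers a) x ⊆ Q := by
    rintro _ ⟨⟨b, hb⟩, rfl⟩
    obtain ⟨n, rfl⟩ := mem_powers_iff_mem_zpowers.2 hb
    exact hpow n
  have hmin' : ∀ q : ℕ, q.Prime → q ∣ Nat.card (Subgroup.zpowers a) → p ≤ q :=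
    fun q hq hdvd => hmin q hq (hdvd.trans (Subgroup.card_subgroup_dvd_card _))
  calc p ≤ (orbit (Subgroup.zpowers a) x).ncard :=
        le_ncard_orbit hmin' (a := ⟨a, Subgroup.mem_zpowers a⟩) hax
    _ ≤ Q.ncard := Set.ncard_le_ncard horbit hQ

end Orbits

section Cosets

variable {G : Type*} [Group G] [Finite G]

theorem ncard_image_mk_mul_ncard_le {K : Subgroup G} {A X : Set G} (hX : X ⊆ K) :
    ((↑) '' A : Set (G ⧸ K)).ncard * X.ncard ≤ (A * X).ncard := by
  obtain ⟨A', hA'A, hbij⟩ := Set.exists_subset_bijOn A ((↑) : G → G ⧸ K)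
  rw [← hbij.image_eq, hbij.injOn.ncard_image, ← Set.ncard_prod]
  refine Set.ncard_le_ncard_of_injOn (fun ax => ax.1 * ax.2) ?_ ?_
  · rintro ⟨a, x⟩ ⟨ha, hx⟩
    exact Set.mul_mem_mul (hA'A ha) hx
  · rintro ⟨a, x⟩ ⟨ha, hx⟩ ⟨b, y⟩ ⟨hb, hy⟩ (h : a * x = b * y)
    have hab : a⁻¹ * b = x * y⁻¹ := by
      rw [inv_mul_eq_iff_eq_mul, ← mul_assoc, h, mul_inv_cancel_right]
    obtain rfl : a = b :=
      hbij.injOn ha hb (QuotientGroup.eq.2 (hab ▸ K.mul_mem (hX hx) (K.inv_mem (hX hy))))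
    rw [mul_left_cancel h]

theorem min_le_ncard_image_mk_subseqProds {p : ℕ}
    (hmin : ∀ q : ℕ, q.Prime → q ∣ Nat.card G → p ≤ q) (K : Subgroup G) {D : Multiset G}
    (hD : ∀ x ∈ D, x ∉ K) :
    min (Multiset.card D + 1) p ≤ ((↑) '' insert 1 (subseqProds D) : Set (G ⧸ K)).ncard := by
  induction D using Multiset.induction_on with
  | empty =>
    have hempty : subseqProds (0 : Multiset G) = ∅ :=
      Set.eq_empty_of_forall_notMem fun _ ⟨l, hne, hle, _⟩ =>
        hne (by simpa using hle)
    simp [hempty]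
  | cons a D ih =>
    set Q : Set (G ⧸ K) := (↑) '' insert 1 (subseqProds D)
    set Q' : Set (G ⧸ K) := (↑) '' insert 1 (subseqProds (a ::ₘ D))
    have ha : a ∉ K := hD a (Multiset.mem_cons_self a D)
    have hQ : Q ⊆ Q' :=
      Set.image_mono (Set.insert_subset_insert (subseqProds_mono (Multiset.le_cons_self D a)))
    have haQ : a • Q ⊆ Q' := by
      rintro _ ⟨_, ⟨x, hx, rfl⟩, rfl⟩
      refine ⟨a * x, ?_, (MulAction.Quotient.smul_mk K a x).symm⟩
      rw [← Multiset.singleton_add]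
      exact mul_mem_insert_one_subseqProds (Or.inr (mem_subseqProds_singleton a)) hx
    have ih' := ih fun x hx => hD x (Multiset.mem_cons_of_mem hx)
    rw [Multiset.card_cons]
    by_cases hstable : a • Q ⊆ Q
    · have hmove : a • ((1 : G) : G ⧸ K) ≠ (1 : G) := by
        rw [MulAction.Quotient.smul_mk, smul_eq_mul, mul_one, Ne, QuotientGroup.eq, mul_one]
        exact fun h => ha (inv_inv a ▸ K.inv_mem h)
      have hp : p ≤ Q.ncard :=
        le_ncard_of_smul_subset hmin (Set.toFinite Q) ⟨1, Set.mem_insert 1 _, rfl⟩ hmove hstable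
      exact (min_le_right _ _).trans (hp.trans (Set.ncard_le_ncard hQ))
    · obtain ⟨y, hy, hyQ⟩ := Set.not_subset.1 hstable
      have hgrow : (insert y Q).ncard ≤ Q'.ncard :=
        Set.ncard_le_ncard (Set.insert_subset (haQ hy) hQ)
      rw [Set.ncard_insert_of_notMem hyQ] at hgrow
      omega

end Cosets

theorem mul_card_le_card_subseqProds_general {G : Type*} [Group G] [Fintype G]
    (p : ℕ)
    (hmin : ∀ q : ℕ, q.Prime → q ∣ Fintype.card G → p ≤ q)
    (g : G) (C D : Multiset G) (hC : OneProdFree C)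
    (hCg : ∀ x ∈ C, x ∈ Subgroup.zpowers g)
    (hD : Multiset.card D = p - 1) (hDg : ∀ x ∈ D, x ∉ Subgroup.zpowers g) :
    p * Multiset.card C ≤ (subseqProds (C + D)).ncard := by
  rw [← Nat.card_eq_fintype_card] at hmin
  have hcosets := min_le_ncard_image_mk_subseqProds hmin _ hDg
  rw [hD, show min (p - 1 + 1) p = p by omega] at hcosets
  have hprods : insert 1 (subseqProds D) * subseqProds C ⊆ subseqProds (C + D) := by
    rintro _ ⟨x, hx, y, hy, rfl⟩
    exact add_comm D C ▸ mul_mem_subseqProds hx hy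
  calc p * Multiset.card C ≤ p * (subseqProds C).ncard := by
        gcongr; exact hC.card_le_ncard_subseqProds
    _ ≤ _ * (subseqProds C).ncard := Nat.mul_le_mul_right _ hcosets
    _ ≤ (insert 1 (subseqProds D) * subseqProds C).ncard :=
        ncard_image_mk_mul_ncard_le (subseqProds_subset_of_forall_mem hCg)
    _ ≤ (subseqProds (C + D)).ncard := Set.ncard_le_ncard hprods

/-- Let `G` be a finite group, `p` the smallest prime divisor of `|G|`, and `g ∈ G`.
Let `C` be a one-product free sequence with all terms in `⟨g⟩` and let `D` be a
sequence of length `p - 1` with all terms in `G \ ⟨g⟩`. Then `|Π(C·D)| ≥ p * |C|`. -/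
theorem mul_card_le_card_subseqProds {G : Type*} [Group G] [Fintype G]
    (p : ℕ) (hp : p.Prime) (hpn : p ∣ Fintype.card G)
    (hmin : ∀ q : ℕ, q.Prime → q ∣ Fintype.card G → p ≤ q)
    (g : G) (C D : Multiset G) (hC : OneProdFree C)
    (hCg : ∀ x ∈ C, x ∈ Subgroup.zpowers g)
    (hD : Multiset.card D = p - 1) (hDg : ∀ x ∈ D, x ∉ Subgroup.zpowers g) :
    p * Multiset.card C ≤ (subseqProds (C + D)).ncard :=
  mul_card_le_card_subseqProds_general p hmin g C D hC hCg hD hDg
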